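/- arXiv:2001.11246 — 2 statements merged into one kernel-verified Lean document; each statement's English description precedes it below -/
import Mathlib

section
/- Let η(t) be defined recursively by η_x(t+1) = η_x(t) − 𝟙{η_x(t) > 0} + ∑_{y : η_y(t) > 0} 𝟙{u_{t+1}(y) = x}, for a given sequence u_1, u_2, … : Fin L → Fin L and initial configuration η(0). Define B̃_x(t) := ∑_{s=0}^{t−1} ∑_{y} 𝟙{u_{s+1}(y) = x}. Then for every t ≥ 0 and x, η_x(t) ≤ max(η_x(0) − t, 0) + B̃_x(t). -/
/-! Each step removes at most one particle from a site and adds at most the number of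
`y` with `u (t + 1) y = x`. A sequence that loses at most one unit per step while gaining
at most `b t` stays below `a 0 - t + ∑ s < t, b s`: truncated subtraction absorbs the
steps after the initial mass is exhausted. -/

open Finset

theorem le_sub_add_sum_range_of_le_pred_add {a b : ℕ → ℕ}
    (h : ∀ t, a (t + 1) ≤ a t - 1 + b t) (t : ℕ) :
    a t ≤ a 0 - t + ∑ s ∈ range t, b s := by
  induction t with
  | zero => simp
  | succ t ih =>
    rw [sum_range_succ]
    have := h t
    omega

theorem sub_ite_pos_one (n : ℕ) : n - (if 0 < n then 1 else 0) = n - 1 := by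
  split_ifs <;> omega

theorem card_filter_and_le {α : Type*} (s : Finset α) (p q : α → Prop)
    [DecidablePred p] [DecidablePred q] :
    (s.filter (fun y => p y ∧ q y)).card ≤ (s.filter q).card :=
  card_le_card fun _ hy => mem_filter.2 ⟨(mem_filter.1 hy).1, (mem_filter.1 hy).2.2⟩

theorem stmt_2 {L : ℕ} (η : ℕ → Fin L → ℕ) (u : ℕ → Fin L → Fin L)
    (hrec : ∀ t x, η (t + 1) x =
      η t x - (if 0 < η t x then 1 else 0) +
        (Finset.univ.filter (fun y => 0 < η t y ∧ u (t + 1) y = x)).card) :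
    ∀ t x, η t x ≤ (η 0 x - t) +
      ∑ s ∈ Finset.range t, (Finset.univ.filter (fun y => u (s + 1) y = x)).card := by
  intro t x
  refine le_sub_add_sum_range_of_le_pred_add (a := fun t => η t x) (fun t => ?_) t
  rw [hrec, sub_ite_pos_one]
  exact Nat.add_le_add_left (card_filter_and_le _ _ _) _
end

section
/- Let Ω = {η : Fin L → ℕ | ∑_x η_x = N}. Say η, ξ ∈ Ω are adjacent if there exist x ≠ y with ξ_x = η_x − 1, ξ_y = η_y + 1, and ξ_z = η_z otherwise. Then any two configurations η, ξ ∈ Ω are connected by a path of adjacent configurations of length at most N, and moreover the path can be chosen so that every intermediate configuration ζ satisfies ‖ζ‖_∞ ≤ max(‖η‖_∞, ‖ξ‖_∞). -/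
/-- Two configurations are adjacent if one is obtained from the other by moving
a single particle from site `x` to site `y`. -/
def AdjacentConfig {L : ℕ} (η ξ : Fin L → ℕ) : Prop :=
  ∃ x y : Fin L, x ≠ y ∧ ξ x + 1 = η x ∧ ξ y = η y + 1 ∧
    ∀ z, z ≠ x → z ≠ y → ξ z = η z

/-!
Let `excess η ξ = ∑ₓ (η x - ξ x)` be the number of particles of `η` lying in excess of `ξ`.
If `η ≠ ξ` carry the same number of particles, there is a site `x` with `ξ x < η x` and a site
`y` with `η y < ξ y`; moving one particle from `x` to `y` lowers the excess by one, lowers the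
occupation of `x`, and raises that of `y` to at most `ξ y`. Iterating gives a path of length
`excess η ξ ≤ N` whose configurations never exceed the larger of the two maxima.
-/

open Finset

section Configurations

variable {ι : Type*} {η ξ : ι → ℕ} {x y : ι}

section Excess

variable [Fintype ι]

def excess (η ξ : ι → ℕ) : ℕ := ∑ z, (η z - ξ z)

theorem excess_le_sum (η ξ : ι → ℕ) : excess η ξ ≤ ∑ z, η z :=
  sum_le_sum fun _ _ ↦ Nat.sub_le _ _

theorem eq_of_excess_eq_zero (hsum : ∑ z, η z = ∑ z, ξ z) (h : excess η ξ = 0) : η = ξ := by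
  have hle : ∀ z ∈ univ, η z ≤ ξ z := fun z hz ↦
    Nat.sub_eq_zero_iff_le.mp (sum_eq_zero_iff.mp h z hz)
  funext z
  exact (sum_eq_sum_iff_of_le hle).mp hsum z (mem_univ z)

theorem exists_lt_of_excess_ne_zero (h : excess η ξ ≠ 0) : ∃ x, ξ x < η x := by
  obtain ⟨x, -, hx⟩ := exists_ne_zero_of_sum_ne_zero h
  exact ⟨x, Nat.lt_of_sub_ne_zero hx⟩

theorem exists_lt_of_sum_eq (hsum : ∑ z, η z = ∑ z, ξ z) (hx : ξ x < η x) : ∃ y, η y < ξ y := by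
  by_contra! hle
  exact (sum_lt_sum (fun z _ ↦ hle z) ⟨x, mem_univ x, hx⟩).ne' hsum

end Excess

variable [DecidableEq ι]

def moveParticle (η : ι → ℕ) (x y : ι) : ι → ℕ :=
  Function.update (Function.update η x (η x - 1)) y (η y + 1)

theorem moveParticle_apply_left (hxy : x ≠ y) : moveParticle η x y x = η x - 1 := by
  simp [moveParticle, hxy]

@[simp]
theorem moveParticle_apply_right : moveParticle η x y y = η y + 1 := by
  simp [moveParticle]

theorem moveParticle_apply_of_ne {z : ι} (hzx : z ≠ x) (hzy : z ≠ y) :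
    moveParticle η x y z = η z := by
  simp [moveParticle, hzx, hzy]

theorem moveParticle_le {M : ℕ} (hη : ∀ z, η z ≤ M) (hy : η y < M) (z : ι) :
    moveParticle η x y z ≤ M := by
  by_cases hzy : z = y
  · subst hzy; simpa using hy
  by_cases hzx : z = x
  · subst hzx; rw [moveParticle_apply_left hzy]; exact (Nat.sub_le _ _).trans (hη z)
  · rw [moveParticle_apply_of_ne hzx hzy]; exact hη z

variable [Fintype ι]

theorem sum_add_eq_sum_add_of_forall_ne {M : Type*} [AddCommMonoid M] {f g : ι → M} (a : ι)
    (h : ∀ z ≠ a, f z = g z) : ∑ z, f z + g a = ∑ z, g z + f a := by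
  rw [← add_sum_erase univ f (mem_univ a), ← add_sum_erase univ g (mem_univ a),
    sum_congr rfl fun z hz ↦ h z (ne_of_mem_erase hz)]
  abel

theorem sum_moveParticle (hxy : x ≠ y) (hx : 0 < η x) :
    ∑ z, moveParticle η x y z = ∑ z, η z := by
  set η₁ := Function.update η x (η x - 1)
  have h₁ := sum_add_eq_sum_add_of_forall_ne (f := η₁) (g := η) x
    fun z hz ↦ Function.update_of_ne hz _ _
  have h₂ := sum_add_eq_sum_add_of_forall_ne (f := moveParticle η x y) (g := η₁) y
    fun z hz ↦ Function.update_of_ne hz _ _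
  simp only [η₁, Function.update_self, Function.update_of_ne hxy.symm,
    moveParticle_apply_right] at h₁ h₂
  omega

theorem excess_moveParticle (hx : ξ x < η x) (hy : η y < ξ y) :
    excess (moveParticle η x y) ξ + 1 = excess η ξ := by
  have hxy : x ≠ y := by rintro rfl; omega
  have h := sum_add_eq_sum_add_of_forall_ne
    (f := fun z ↦ moveParticle η x y z - ξ z) (g := fun z ↦ η z - ξ z) x fun z hzx ↦ by
      by_cases hzy : z = y
      · subst hzy; simp only [moveParticle_apply_right]; omega
      · rw [moveParticle_apply_of_ne hzx hzy]
  simp only [moveParticle_apply_left hxy] at h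
  unfold excess
  omega

end Configurations

section Path

variable {L : ℕ}

def IsBoundedPath (M k : ℕ) (ζ : ℕ → Fin L → ℕ) : Prop :=
  (∀ j < k, AdjacentConfig (ζ j) (ζ (j + 1))) ∧ ∀ j ≤ k, ∀ x, ζ j x ≤ M

theorem adjacentConfig_moveParticle {η : Fin L → ℕ} {x y : Fin L} (hxy : x ≠ y) (hx : 0 < η x) :
    AdjacentConfig η (moveParticle η x y) :=
  ⟨x, y, hxy, by rw [moveParticle_apply_left hxy]; omega, moveParticle_apply_right,
    fun _ ↦ moveParticle_apply_of_ne⟩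

theorem isBoundedPath_const {M : ℕ} {η : Fin L → ℕ} (hη : ∀ x, η x ≤ M) :
    IsBoundedPath M 0 fun _ ↦ η :=
  ⟨fun _ hj ↦ absurd hj (Nat.not_lt_zero _), fun _ _ ↦ hη⟩

theorem IsBoundedPath.cons {M k : ℕ} {η : Fin L → ℕ} {ζ : ℕ → Fin L → ℕ}
    (h : IsBoundedPath M k ζ) (hadj : AdjacentConfig η (ζ 0)) (hη : ∀ x, η x ≤ M) :
    IsBoundedPath M (k + 1) fun | 0 => η | j + 1 => ζ j := by
  refine ⟨fun j hj ↦ ?_, fun j hj ↦ ?_⟩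
  · cases j with
    | zero => exact hadj
    | succ j => exact h.1 j (by omega)
  · cases j with
    | zero => exact hη
    | succ j => exact h.2 j (by omega)

theorem exists_isBoundedPath {M : ℕ} {η ξ : Fin L → ℕ} (hsum : ∑ x, η x = ∑ x, ξ x)
    (hη : ∀ x, η x ≤ M) (hξ : ∀ x, ξ x ≤ M) :
    ∃ ζ : ℕ → Fin L → ℕ, ζ 0 = η ∧ ζ (excess η ξ) = ξ ∧ IsBoundedPath M (excess η ξ) ζ := by
  induction hd : excess η ξ generalizing η with
  | zero => exact ⟨fun _ ↦ η, rfl, eq_of_excess_eq_zero hsum hd, isBoundedPath_const hη⟩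
  | succ d ih =>
    obtain ⟨x, hx⟩ := exists_lt_of_excess_ne_zero (hd.trans_ne d.succ_ne_zero)
    obtain ⟨y, hy⟩ := exists_lt_of_sum_eq hsum hx
    have hxy : x ≠ y := by rintro rfl; omega
    have hd' : excess (moveParticle η x y) ξ = d := by
      have := excess_moveParticle hx hy; omega
    obtain ⟨ζ, h0, hζ, hpath⟩ := ih ((sum_moveParticle hxy (by omega)).trans hsum)
      (moveParticle_le hη (hy.trans_le (hξ y))) hd'
    exact ⟨_, rfl, hζ, hpath.cons (h0 ▸ adjacentConfig_moveParticle hxy (by omega)) hη⟩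

end Path

theorem stmt_11 {L N : ℕ} (η ξ : Fin L → ℕ)
    (hη : ∑ x, η x = N) (hξ : ∑ x, ξ x = N) :
    ∃ (k : ℕ) (ζ : ℕ → Fin L → ℕ), k ≤ N ∧ ζ 0 = η ∧ ζ k = ξ ∧
      (∀ j < k, AdjacentConfig (ζ j) (ζ (j + 1))) ∧
      (∀ j ≤ k, ∀ x, ζ j x ≤ max (Finset.univ.sup η) (Finset.univ.sup ξ)) := by
  obtain ⟨ζ, h0, hk, hadj, hbound⟩ := exists_isBoundedPath (hη.trans hξ.symm)
    (fun x ↦ (le_sup (mem_univ x)).trans (le_max_left _ (univ.sup ξ)))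
    (fun x ↦ (le_sup (mem_univ x)).trans (le_max_right (univ.sup η) _))
  exact ⟨excess η ξ, ζ, hη ▸ excess_le_sum η ξ, h0, hk, hadj, hbound⟩
end
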